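/- arXiv:2206.11177 — 5 statements merged into one kernel-verified Lean document; each statement's English description precedes it below -/
import Mathlib

section
/- Let H be a real Hilbert space and A₁,…,A_n : H → 2^H maximally monotone, p ∈ {1,…,n}. Then x ∈ H is a zero of Σ_{i=1}^n A_i if and only if there exists (y₁,…,y_n) ∈ H^n with y_p = x solving the primal-dual system: 0 ∈ A_i⁻¹ y_i − y_p for all i ≠ p, and 0 ∈ A_p y_p + Σ_{j≠p} y_j. Equivalently, y_p ∈ zer(Σ_i A_i) for every zero (y₁,…,y_n) of the primal-dual operator Φ_{A,p}, and every zero of Σ_i A_i arises as the p-th component of some zero of Φ_{A,p}. -/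
open RealInnerProductSpace Finset

/-- A set-valued operator `A : H → 2^H` is monotone. -/
def MonotoneOp {H : Type*} [NormedAddCommGroup H] [InnerProductSpace ℝ H]
    (A : H → Set H) : Prop :=
  ∀ ⦃x u y v : H⦄, u ∈ A x → v ∈ A y → 0 ≤ ⟪u - v, x - y⟫

/-- Maximal monotonicity. -/
def MaxMonotone {H : Type*} [NormedAddCommGroup H] [InnerProductSpace ℝ H]
    (A : H → Set H) : Prop :=
  MonotoneOp A ∧ ∀ B : H → Set H, MonotoneOp B → (∀ x, A x ⊆ B x) → ∀ x, B x = A x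

/-- A real matrix acting componentwise on a power of a real vector space. -/
def matVecH {H : Type*} [AddCommGroup H] [Module ℝ H] {a b : ℕ}
    (M : Matrix (Fin a) (Fin b) ℝ) (x : Fin b → H) : Fin a → H :=
  fun i => ∑ j, M i j • x j

/-- `Γ_p = R_p - R_pᵀ`, where `R_p` has ones in row `p` and zeros elsewhere. -/
def GammaMat (n : ℕ) (p : Fin n) : Matrix (Fin n) (Fin n) ℝ :=
  Matrix.of fun i j => (if i = p then (1 : ℝ) else 0) - (if j = p then (1 : ℝ) else 0)

/-- The primal-dual operator `Φ_{A,p} = Δ_{A,p} + Γ_p` on `H^n`. -/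
def PhiOp {H : Type*} [NormedAddCommGroup H] [InnerProductSpace ℝ H] {n : ℕ}
    (A : Fin n → H → Set H) (p : Fin n) (y : Fin n → H) : Set (Fin n → H) :=
  {u | ∀ i, u i - matVecH (GammaMat n p) y i ∈
        (if i = p then A i (y i) else {w | y i ∈ A i w})}

lemma matVec_gamma {H : Type*} [AddCommGroup H] [Module ℝ H] {n : ℕ} (p : Fin n)
    (y : Fin n → H) (i : Fin n) :
    matVecH (GammaMat n p) y i = (if i = p then ∑ j, y j else 0) - y p := by
  unfold matVecH GammaMat
  simp only [Matrix.of_apply, sub_smul, Finset.sum_sub_distrib, ite_smul, one_smul, zero_smul]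
  congr 1
  · split <;> simp
  · simp

/-- `x` is a zero of `Σᵢ Aᵢ` iff there is `y ∈ Hⁿ` with `y p = x` solving the
primal-dual system, i.e. `0 ∈ Φ_{A,p} y`; the primal solution is recovered as the `p`-th
component of any zero of `Φ_{A,p}`. -/
theorem stmt4 {H : Type*} [NormedAddCommGroup H] [InnerProductSpace ℝ H] {n : ℕ}
    (A : Fin n → H → Set H) (hmax : ∀ i, MaxMonotone (A i)) (p : Fin n) (x : H) :
    (∃ u : Fin n → H, (∀ i, u i ∈ A i x) ∧ ∑ i, u i = 0) ↔
      ∃ y : Fin n → H, y p = x ∧ (0 : Fin n → H) ∈ PhiOp A p y := by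
  simp only [PhiOp, Set.mem_setOf_eq, Pi.zero_apply, matVec_gamma, zero_sub, neg_sub]
  constructor
  · rintro ⟨u, hu, hsum⟩
    refine ⟨fun i => if i = p then x else u i, by simp, ?_⟩
    intro i
    have hs : ∑ j, (if j = p then x else u j) = x - u p := by
      calc ∑ j, (if j = p then x else u j)
            = ∑ j, ((if j = p then x - u p else 0) + u j) := by
              apply Finset.sum_congr rfl; intro j _
              by_cases hj : j = p <;> simp [hj]
          _ = (∑ j, if j = p then x - u p else 0) + ∑ j, u j := Finset.sum_add_distrib
          _ = x - u p := by simp [hsum]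
    by_cases hi : i = p
    · simp only [hi, if_pos rfl, hs]
      simpa using hu p
    · simp only [if_neg hi]
      simpa using hu i
  · rintro ⟨y, hyp, hzero⟩
    refine ⟨fun i => if i = p then y p - ∑ j, y j else y i, ?_, ?_⟩
    · intro i
      have h := hzero i
      by_cases hi : i = p
      · simp only [hi, if_pos rfl] at h ⊢
        rw [← hyp]
        exact h
      · simp only [if_neg hi] at h ⊢
        rw [← hyp]
        simpa using h
    · have hs : ∑ i, (if i = p then y p - ∑ j, y j else y i)
          = (∑ i, (if i = p then y p - ∑ j, y j - y i else 0)) + ∑ i, y i := by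
        rw [← Finset.sum_add_distrib]
        apply Finset.sum_congr rfl; intro j _
        by_cases hj : j = p
        · rw [hj, if_pos rfl, if_pos rfl, sub_add_cancel]
        · simp [hj]
      rw [hs]
      simp
end

section
/- Let H be a real Hilbert space, F ⊂ {1,…,n}, p ∈ {1,…,n} \ F, and let A = (A₁,…,A_n) with each A_i maximally monotone and A_i β_i-cocoercive for i ∈ F. Then for all x, y ∈ H^n and all u ∈ Φ_{A,p}x, v ∈ Φ_{A,p}y, one has ⟨u − v, x − y⟩ ≥ Σ_{i∈F} β_i ‖x_i − y_i‖². -/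
open RealInnerProductSpace Finset

/-- `f` is `β`-cocoercive. -/
def Cocoercive {H : Type*} [NormedAddCommGroup H] [InnerProductSpace ℝ H]
    (β : ℝ) (f : H → H) : Prop :=
  ∀ x y : H, β * ‖f x - f y‖ ^ 2 ≤ ⟪f x - f y, x - y⟫

lemma gamma_skew {H : Type*} [NormedAddCommGroup H] [InnerProductSpace ℝ H] {n : ℕ}
    (p : Fin n) (z : Fin n → H) :
    ∑ i, ⟪matVecH (GammaMat n p) z i, z i⟫ = 0 := by
  have : ∀ i, ⟪matVecH (GammaMat n p) z i, z i⟫ =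
      ∑ j, ((if i = p then (1:ℝ) else 0) - (if j = p then (1:ℝ) else 0)) * ⟪z j, z i⟫ := by
    intro i
    simp [matVecH, GammaMat, sum_inner, real_inner_smul_left]
  simp only [this, sub_mul, Finset.sum_sub_distrib, ite_mul, one_mul, zero_mul]
  rw [Finset.sum_comm (f := fun i j => if i = p then ⟪z j, z i⟫ else 0)]
  simp [Finset.sum_ite_eq', real_inner_comm]

/-- If each `Aᵢ` is maximally monotone and `Aᵢ` is `βᵢ`-cocoercive
(single-valued, given by `a i`) for `i ∈ F`, `p ∉ F`, then
`⟨u − v, x − y⟩ ≥ Σ_{i∈F} βᵢ ‖xᵢ − yᵢ‖²` for all `u ∈ Φ_{A,p} x`, `v ∈ Φ_{A,p} y`. -/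
theorem stmt6 {H : Type*} [NormedAddCommGroup H] [InnerProductSpace ℝ H] {n : ℕ}
    (F : Finset (Fin n)) (hF : F ⊂ Finset.univ) (p : Fin n) (hp : p ∉ F)
    (A : Fin n → H → Set H) (a : Fin n → H → H) (β : Fin n → ℝ)
    (hmax : ∀ i, MaxMonotone (A i))
    (hβ : ∀ i ∈ F, 0 < β i)
    (hsv : ∀ i ∈ F, A i = fun x => {a i x})
    (hcoco : ∀ i ∈ F, Cocoercive (β i) (a i)) :
    ∀ x y u v : Fin n → H, u ∈ PhiOp A p x → v ∈ PhiOp A p y →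
      ∑ i ∈ F, β i * ‖x i - y i‖ ^ 2 ≤ ∑ i, ⟪u i - v i, x i - y i⟫ := by
  intro x y u v hu hv
  set gx := matVecH (GammaMat n p) x with hgx
  set gy := matVecH (GammaMat n p) y with hgy
  set z : Fin n → H := fun i => x i - y i with hz
  have hglin : ∀ i, gx i - gy i = matVecH (GammaMat n p) z i := by
    intro i
    simp [hgx, hgy, hz, matVecH, ← Finset.sum_sub_distrib, smul_sub]
  have hsplit : ∀ i, ⟪u i - v i, z i⟫ =
      ⟪(u i - gx i) - (v i - gy i), z i⟫ + ⟪matVecH (GammaMat n p) z i, z i⟫ := by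
    intro i
    rw [← hglin, ← inner_add_left]
    congr 1
    abel
  have key : ∑ i, ⟪u i - v i, x i - y i⟫ = ∑ i, ⟪(u i - gx i) - (v i - gy i), z i⟫ := by
    calc ∑ i, ⟪u i - v i, x i - y i⟫ = ∑ i, ⟪u i - v i, z i⟫ := rfl
      _ = ∑ i, (⟪(u i - gx i) - (v i - gy i), z i⟫ + ⟪matVecH (GammaMat n p) z i, z i⟫) :=
          Finset.sum_congr rfl (fun i _ => hsplit i)
      _ = ∑ i, ⟪(u i - gx i) - (v i - gy i), z i⟫ := by
          rw [Finset.sum_add_distrib, gamma_skew, add_zero]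
  rw [key]
  have hterm : ∀ i ∈ F, β i * ‖x i - y i‖ ^ 2 ≤ ⟪(u i - gx i) - (v i - gy i), z i⟫ := by
    intro i hi
    have hne : i ≠ p := fun h => hp (h ▸ hi)
    have hux := hu i
    have hvy := hv i
    rw [if_neg hne] at hux hvy
    rw [hsv i hi] at hux hvy
    have hx : x i = a i (u i - gx i) := hux
    have hy : y i = a i (v i - gy i) := hvy
    have := hcoco i hi (u i - gx i) (v i - gy i)
    rw [← hx, ← hy, real_inner_comm] at this
    exact this
  calc ∑ i ∈ F, β i * ‖x i - y i‖ ^ 2 ≤ ∑ i ∈ F, ⟪(u i - gx i) - (v i - gy i), z i⟫ :=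
        Finset.sum_le_sum hterm
    _ ≤ ∑ i, ⟪(u i - gx i) - (v i - gy i), z i⟫ := by
        apply Finset.sum_le_sum_of_subset_of_nonneg (Finset.subset_univ F)
        intro i _ hiF
        by_cases hip : i = p
        · subst hip
          have hux := hu i; have hvy := hv i
          rw [if_pos rfl] at hux hvy
          exact (hmax i).1 hux hvy
        · have hux := hu i; have hvy := hv i
          rw [if_neg hip] at hux hvy
          have := (hmax i).1 (hux : x i ∈ A i (u i - gx i)) (hvy : y i ∈ A i (v i - gy i))
          rw [real_inner_comm] at this
          exact this
end

section
/- Let M ∈ ℝ^(n×n) be a p-kernel over 𝒜_n^F with rank M = d, and let K ∈ ℝ^(n×d), H ∈ ℝ^(d×n) satisfy range K = (ker M)ᗮ and ker H = (range M)ᗮ. Then the generalized primal-dual resolvent with representation (p, M, MK, HMK, HM) satisfies the conditions: (i) M is a p-kernel; (ii) ker[MK | −M] ⊇ ker[HMK | −HM]; (iii) range(HMK) ⊇ range(HM). Furthermore, such K and H exist for every p-kernel M (e.g., take the columns of K to be d linearly independent rows of M and the rows of H to be d linearly independent columns of M). -/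
/-!
Since `ker H = (range M)ᗮ`, `H` is injective on `range M`, so `H M K z = H M y` forces
`M K z = M y`. Since `range K = (ker M)ᗮ` complements `ker M`, every `M y` is some `M K z`.
For existence, take for `K` and `Hᵀ` matrices whose columns form bases of `(ker M)ᗮ` and of
`range M`, both of dimension `rank M`; then `ker H = (range Hᵀ)ᗮ = (range M)ᗮ`.
-/

open Matrix

/-- `M` is a `p`-kernel over `𝒜ₙ^F`. -/
def IsPKernel {n : ℕ} (F : Finset (Fin n)) (p : Fin n)
    (M : Matrix (Fin n) (Fin n) ℝ) : Prop :=
  p ∉ F ∧ (∀ i j : Fin n, i < j → (M + GammaMat n p) i j = 0) ∧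
    (∀ i, 0 ≤ (M + GammaMat n p) i i) ∧ ∀ i, ((M + GammaMat n p) i i = 0 ↔ i ∈ F)

open Module LinearMap

namespace Matrix

variable {m n k : Type*}

lemma ker_toEuclideanLin_transpose [Fintype m] [Fintype n] [DecidableEq m] [DecidableEq n]
    (A : Matrix m n ℝ) :
    ker (toEuclideanLin Aᵀ) = (range (toEuclideanLin A))ᗮ := by
  rw [orthogonal_range, ← toEuclideanLin_conjTranspose_eq_adjoint,
    conjTranspose_eq_transpose_of_trivial]

lemma exists_range_toEuclideanLin_eq [Fintype m] {d : ℕ}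
    (W : Submodule ℝ (EuclideanSpace ℝ m)) (hW : finrank ℝ W = d) :
    ∃ A : Matrix m (Fin d) ℝ, range (toEuclideanLin A) = W := by
  let e : EuclideanSpace ℝ (Fin d) ≃ₗ[ℝ] W := LinearEquiv.ofFinrankEq _ _ (by simp [hW])
  refine ⟨toEuclideanLin.symm (W.subtype ∘ₗ e.toLinearMap), ?_⟩
  rw [LinearEquiv.apply_symm_apply, range_comp, LinearEquiv.range, Submodule.map_top,
    Submodule.range_subtype]

lemma finrank_range_toEuclideanLin [Fintype m] [Fintype n] [DecidableEq n]
    (A : Matrix m n ℝ) :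
    finrank ℝ (range (toEuclideanLin A)) = A.rank := by
  rw [toEuclideanLin_eq_toLin_orthonormal, rank_eq_finrank_range_toLin A
    (EuclideanSpace.basisFun m ℝ).toBasis (EuclideanSpace.basisFun n ℝ).toBasis]

lemma finrank_orthogonal_ker_toEuclideanLin [Fintype m] [Fintype n] [DecidableEq n]
    (A : Matrix m n ℝ) :
    finrank ℝ (ker (toEuclideanLin A))ᗮ = A.rank := by
  have h₁ := (ker (toEuclideanLin A)).finrank_add_finrank_orthogonal
  have h₂ := finrank_range_add_finrank_ker (toEuclideanLin A)
  rw [finrank_range_toEuclideanLin] at h₂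
  omega

lemma mulVec_eq_of_mul_mulVec_eq [Fintype m] [Fintype n] [DecidableEq m] [DecidableEq n]
    {H : Matrix k m ℝ} {M : Matrix m n ℝ}
    (hH : ker (toEuclideanLin H) = (range (toEuclideanLin M))ᗮ)
    {x y : n → ℝ} (hxy : (H * M) *ᵥ x = (H * M) *ᵥ y) : M *ᵥ x = M *ᵥ y := by
  let w : EuclideanSpace ℝ m := WithLp.toLp 2 (M *ᵥ (x - y))
  have hw_range : w ∈ range (toEuclideanLin M) := ⟨WithLp.toLp 2 (x - y), rfl⟩
  have hw_ker : w ∈ ker (toEuclideanLin H) := by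
    rw [mem_ker, toLpLin_toLp, toLin'_apply, mulVec_mulVec, mulVec_sub, hxy, sub_self,
      WithLp.toLp_zero]
  rw [hH] at hw_ker
  have hw : w = 0 := (Submodule.orthogonal_disjoint _).le_bot ⟨hw_range, hw_ker⟩
  rw [← sub_eq_zero, ← mulVec_sub]
  exact congrArg WithLp.ofLp hw

lemma exists_mul_mulVec_eq_mulVec [Fintype n] [Fintype k] [DecidableEq n] [DecidableEq k]
    {M : Matrix m n ℝ} {K : Matrix n k ℝ}
    (hK : range (toEuclideanLin K) = (ker (toEuclideanLin M))ᗮ)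
    (y : n → ℝ) : ∃ z : k → ℝ, (M * K) *ᵥ z = M *ᵥ y := by
  obtain ⟨a, ha, c, hc, hy⟩ :=
    (ker (toEuclideanLin M))ᗮ.exists_add_mem_mem_orthogonal (WithLp.toLp 2 y)
  rw [Submodule.orthogonal_orthogonal, mem_ker] at hc
  rw [← hK] at ha
  obtain ⟨z, rfl⟩ := ha
  refine ⟨WithLp.ofLp z, ?_⟩
  have hy' : y = K *ᵥ WithLp.ofLp z + WithLp.ofLp c := congrArg WithLp.ofLp hy
  have hMc : M *ᵥ WithLp.ofLp c = 0 := congrArg WithLp.ofLp hc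
  rw [hy', mulVec_add, hMc, add_zero, mulVec_mulVec]

end Matrix

theorem stmt9_general {n d : ℕ}
    (M : Matrix (Fin n) (Fin n) ℝ) (hrank : M.rank = d) :
    (∀ (K : Matrix (Fin n) (Fin d) ℝ) (Hm : Matrix (Fin d) (Fin n) ℝ),
      LinearMap.range (Matrix.toEuclideanLin K) = (LinearMap.ker (Matrix.toEuclideanLin M))ᗮ →
      LinearMap.ker (Matrix.toEuclideanLin Hm) = (LinearMap.range (Matrix.toEuclideanLin M))ᗮ →
      ((∀ (z : Fin d → ℝ) (y : Fin n → ℝ),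
          (Hm * M * K).mulVec z = (Hm * M).mulVec y → (M * K).mulVec z = M.mulVec y) ∧
        (∀ y : Fin n → ℝ, ∃ z : Fin d → ℝ,
          (Hm * M * K).mulVec z = (Hm * M).mulVec y))) ∧
    (∃ (K : Matrix (Fin n) (Fin d) ℝ) (Hm : Matrix (Fin d) (Fin n) ℝ),
      LinearMap.range (Matrix.toEuclideanLin K) = (LinearMap.ker (Matrix.toEuclideanLin M))ᗮ ∧
      LinearMap.ker (Matrix.toEuclideanLin Hm) = (LinearMap.range (Matrix.toEuclideanLin M))ᗮ) := by
  refine ⟨fun K Hm hK hH => ⟨fun z y h => ?_, fun y => ?_⟩, ?_⟩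
  · rw [← mulVec_mulVec] at h ⊢
    exact mulVec_eq_of_mul_mulVec_eq hH h
  · obtain ⟨z, hz⟩ := exists_mul_mulVec_eq_mulVec hK y
    exact ⟨z, by rw [Matrix.mul_assoc, ← mulVec_mulVec, hz, mulVec_mulVec]⟩
  · obtain ⟨K, hK⟩ := exists_range_toEuclideanLin_eq _
      ((finrank_orthogonal_ker_toEuclideanLin M).trans hrank)
    obtain ⟨A, hA⟩ := exists_range_toEuclideanLin_eq _
      ((finrank_range_toEuclideanLin M).trans hrank)
    exact ⟨K, Aᵀ, hK, by rw [ker_toEuclideanLin_transpose, hA]⟩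

/-- If `M` is a `p`-kernel with `rank M = d` and `K`, `Hm` satisfy
`range K = (ker M)ᗮ`, `ker Hm = (range M)ᗮ`, then the representation
`(p, M, M K, Hm M K, Hm M)` satisfies `ker [MK | −M] ⊇ ker [HmMK | −HmM]` and
`range (Hm M K) ⊇ range (Hm M)`; moreover such `K`, `Hm` always exist. -/
theorem stmt9 {n d : ℕ} (F : Finset (Fin n)) (p : Fin n)
    (M : Matrix (Fin n) (Fin n) ℝ) (hM : IsPKernel F p M) (hrank : M.rank = d) :
    (∀ (K : Matrix (Fin n) (Fin d) ℝ) (Hm : Matrix (Fin d) (Fin n) ℝ),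
      LinearMap.range (Matrix.toEuclideanLin K) = (LinearMap.ker (Matrix.toEuclideanLin M))ᗮ →
      LinearMap.ker (Matrix.toEuclideanLin Hm) = (LinearMap.range (Matrix.toEuclideanLin M))ᗮ →
      ((∀ (z : Fin d → ℝ) (y : Fin n → ℝ),
          (Hm * M * K).mulVec z = (Hm * M).mulVec y → (M * K).mulVec z = M.mulVec y) ∧
        (∀ y : Fin n → ℝ, ∃ z : Fin d → ℝ,
          (Hm * M * K).mulVec z = (Hm * M).mulVec y))) ∧
    (∃ (K : Matrix (Fin n) (Fin d) ℝ) (Hm : Matrix (Fin d) (Fin n) ℝ),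
      LinearMap.range (Matrix.toEuclideanLin K) = (LinearMap.ker (Matrix.toEuclideanLin M))ᗮ ∧
      LinearMap.ker (Matrix.toEuclideanLin Hm) = (LinearMap.range (Matrix.toEuclideanLin M))ᗮ) :=
  stmt9_general M hrank
end

section
/- Suppose a representation (p, M, N, U, V) with M ∈ ℝ^(n×n), N ∈ ℝ^(n×d), U ∈ ℝ^(d×d), V ∈ ℝ^(d×n) satisfies range U ⊇ range V and ker[U | −V] ⊆ ker[N | −M]. Then there exist matrices S ∈ ℝ^(n×d) and P ∈ ℝ^(d×n) with range P ⊆ (ker U)ᗮ and ker S ⊇ (range U)ᗮ such that V = UP, N = SU, and M = SUP; moreover P and S with these orthogonality properties are unique. -/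
/-!
Any factorization `V = U P₀`, which exists since `range V ⊆ range U`, can be corrected by
subtracting from `P₀` its component in `ker U`; this does not change `U P₀`, and `P` is unique
because a map into `(ker U)ᗮ` is determined by its composite with `U`. Dually, `ker U ⊆ ker N`
makes `N` factor through `U`, and precomposing with the orthogonal projection onto `range U`
gives the factor `S` vanishing on `(range U)ᗮ`, unique because `range U ⊔ (range U)ᗮ` is
everything. Finally, the kernel condition applied to `(P y, y)` gives `M = N P = S U P`.
-/

open Matrix LinearMap

variable {𝕜 E F G : Type*} [RCLike 𝕜] [AddCommGroup G] [Module 𝕜 G]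

section RightFactor

variable [NormedAddCommGroup E] [InnerProductSpace 𝕜 E] [AddCommGroup F] [Module 𝕜 F]

theorem LinearMap.eq_of_comp_eq_of_range_le_orthogonal_ker {b : E →ₗ[𝕜] G} {s₁ s₂ : F →ₗ[𝕜] E}
    (h₁ : range s₁ ≤ (ker b)ᗮ) (h₂ : range s₂ ≤ (ker b)ᗮ) (h : b ∘ₗ s₁ = b ∘ₗ s₂) : s₁ = s₂ := by
  ext x
  have hker : s₁ x - s₂ x ∈ ker b := by
    rw [mem_ker, map_sub, sub_eq_zero]
    exact LinearMap.congr_fun h x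
  have horth : s₁ x - s₂ x ∈ (ker b)ᗮ :=
    sub_mem (h₁ (mem_range_self s₁ x)) (h₂ (mem_range_self s₂ x))
  simpa [sub_eq_zero] using (Submodule.inf_orthogonal_eq_bot (ker b)).le ⟨hker, horth⟩

theorem LinearMap.exists_comp_eq_of_range_le {a : F →ₗ[𝕜] G} {b : E →ₗ[𝕜] G}
    [(ker b).HasOrthogonalProjection] (h : range a ≤ range b) :
    ∃ s : F →ₗ[𝕜] E, range s ≤ (ker b)ᗮ ∧ b ∘ₗ s = a := by
  obtain ⟨t, ht⟩ := Module.projective_lifting_property b.rangeRestrict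
    (a.codRestrict (range b) fun x => h (mem_range_self a x)) b.surjective_rangeRestrict
  have hbt : ∀ x, b (t x) = a x := fun x => congrArg Subtype.val (congr($ht x))
  refine ⟨t - (ker b).starProjection.toLinearMap ∘ₗ t, ?_, ?_⟩
  · rintro _ ⟨x, rfl⟩
    exact (ker b).sub_starProjection_mem_orthogonal (t x)
  · ext x
    have : b ((ker b).starProjection (t x)) = 0 := (ker b).starProjection_apply_mem (t x)
    simp [this, hbt]

theorem LinearMap.existsUnique_comp_eq_of_range_le {a : F →ₗ[𝕜] G} {b : E →ₗ[𝕜] G}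
    [(ker b).HasOrthogonalProjection] (h : range a ≤ range b) :
    ∃! s : F →ₗ[𝕜] E, range s ≤ (ker b)ᗮ ∧ b ∘ₗ s = a :=
  let ⟨s, hs⟩ := exists_comp_eq_of_range_le h
  ⟨s, hs, fun _ hs' => eq_of_comp_eq_of_range_le_orthogonal_ker hs'.1 hs.1 (hs'.2.trans hs.2.symm)⟩

end RightFactor

section LeftFactor

variable [AddCommGroup E] [Module 𝕜 E] [NormedAddCommGroup F] [InnerProductSpace 𝕜 F]

theorem LinearMap.eq_of_comp_eq_of_orthogonal_range_le_ker {b : E →ₗ[𝕜] F}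
    [(range b).HasOrthogonalProjection] {s₁ s₂ : F →ₗ[𝕜] G}
    (h₁ : (range b)ᗮ ≤ ker s₁) (h₂ : (range b)ᗮ ≤ ker s₂) (h : s₁ ∘ₗ b = s₂ ∘ₗ b) : s₁ = s₂ := by
  rw [← sub_eq_zero, ← ker_eq_top, eq_top_iff,
    ← Submodule.sup_orthogonal_of_hasOrthogonalProjection (K := range b)]
  refine sup_le ?_ fun x hx => ?_
  · rintro _ ⟨x, rfl⟩
    rw [mem_ker, sub_apply, sub_eq_zero]
    exact LinearMap.congr_fun h x
  · rw [mem_ker, sub_apply, h₁ hx, h₂ hx, sub_zero]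

theorem LinearMap.exists_comp_eq_of_ker_le {a : E →ₗ[𝕜] G} {b : E →ₗ[𝕜] F}
    [(range b).HasOrthogonalProjection] (h : ker b ≤ ker a) :
    ∃ s : F →ₗ[𝕜] G, (range b)ᗮ ≤ ker s ∧ s ∘ₗ b = a := by
  let t : range b →ₗ[𝕜] G := (ker b).liftQ a h ∘ₗ b.quotKerEquivRange.symm.toLinearMap
  refine ⟨t ∘ₗ (range b).orthogonalProjectionOnto.toLinearMap, fun x hx => ?_, ?_⟩
  · simp [Submodule.orthogonalProjectionOnto_apply_of_mem_orthogonal hx]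
  · ext x
    have : (range b).orthogonalProjectionOnto (b x) = ⟨b x, mem_range_self b x⟩ :=
      Submodule.orthogonalProjectionOnto_mem_subspace_eq_self (K := range b) ⟨_, mem_range_self b x⟩
    simp [t, this]

theorem LinearMap.existsUnique_comp_eq_of_ker_le {a : E →ₗ[𝕜] G} {b : E →ₗ[𝕜] F}
    [(range b).HasOrthogonalProjection] (h : ker b ≤ ker a) :
    ∃! s : F →ₗ[𝕜] G, (range b)ᗮ ≤ ker s ∧ s ∘ₗ b = a :=
  let ⟨s, hs⟩ := exists_comp_eq_of_ker_le h
  ⟨s, hs, fun _ hs' => eq_of_comp_eq_of_orthogonal_range_le_ker hs'.1 hs.1 (hs'.2.trans hs.2.symm)⟩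

end LeftFactor

namespace Matrix

variable {m n k : Type*}

theorem eq_mul_iff_toEuclideanLin_comp [Fintype n] [DecidableEq n] [Fintype k] [DecidableEq k]
    {A : Matrix m k 𝕜} {B : Matrix m n 𝕜} {C : Matrix n k 𝕜} :
    A = B * C ↔ toEuclideanLin B ∘ₗ toEuclideanLin C = toEuclideanLin A := by
  rw [eq_comm, ← toLpLin_mul_same]
  exact toEuclideanLin.injective.eq_iff.symm

theorem existsUnique_eq_mul_of_range_le [Fintype n] [DecidableEq n] [Fintype k] [DecidableEq k]
    {A : Matrix m k 𝕜} {B : Matrix m n 𝕜}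
    (h : range (toEuclideanLin A) ≤ range (toEuclideanLin B)) :
    ∃! P : Matrix n k 𝕜, range (toEuclideanLin P) ≤ (ker (toEuclideanLin B))ᗮ ∧ A = B * P :=
  (toEuclideanLin.toEquiv.existsUnique_congr fun _ =>
    and_congr_right' eq_mul_iff_toEuclideanLin_comp).mpr
    (existsUnique_comp_eq_of_range_le h)

theorem existsUnique_eq_mul_of_ker_le [Fintype m] [DecidableEq m] [Fintype n] [DecidableEq n]
    {A : Matrix k n 𝕜} {B : Matrix m n 𝕜}
    (h : ker (toEuclideanLin B) ≤ ker (toEuclideanLin A)) :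
    ∃! S : Matrix k m 𝕜, (range (toEuclideanLin B))ᗮ ≤ ker (toEuclideanLin S) ∧ A = S * B :=
  (toEuclideanLin.toEquiv.existsUnique_congr fun _ =>
    and_congr_right' eq_mul_iff_toEuclideanLin_comp).mpr
    (existsUnique_comp_eq_of_ker_le h)

end Matrix

/-- If `(p, M, N, U, V)` satisfies `range U ⊇ range V` and
`ker [U | −V] ⊆ ker [N | −M]`, then there are unique `S`, `P` with
`range P ⊆ (ker U)ᗮ`, `ker S ⊇ (range U)ᗮ`, `V = U P`, `N = S U` and `M = S U P`. -/
theorem stmt10 {n d : ℕ} (M : Matrix (Fin n) (Fin n) ℝ) (N : Matrix (Fin n) (Fin d) ℝ)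
    (U : Matrix (Fin d) (Fin d) ℝ) (V : Matrix (Fin d) (Fin n) ℝ)
    (hran : LinearMap.range (Matrix.toEuclideanLin V) ≤ LinearMap.range (Matrix.toEuclideanLin U))
    (hker : ∀ (z : Fin d → ℝ) (y : Fin n → ℝ),
      U.mulVec z = V.mulVec y → N.mulVec z = M.mulVec y) :
    ∃! SP : Matrix (Fin n) (Fin d) ℝ × Matrix (Fin d) (Fin n) ℝ,
      LinearMap.range (Matrix.toEuclideanLin SP.2) ≤ (LinearMap.ker (Matrix.toEuclideanLin U))ᗮ ∧
      (LinearMap.range (Matrix.toEuclideanLin U))ᗮ ≤ LinearMap.ker (Matrix.toEuclideanLin SP.1) ∧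
      V = U * SP.2 ∧ N = SP.1 * U ∧ M = SP.1 * U * SP.2 := by
  have hkerUN : ker (toEuclideanLin U) ≤ ker (toEuclideanLin N) := fun z hz => by
    simpa [toLpLin_apply] using hker (WithLp.ofLp z) 0 (by simpa [toLpLin_apply] using hz)
  obtain ⟨P, ⟨hPorth, hVUP⟩, hPuniq⟩ := existsUnique_eq_mul_of_range_le hran
  obtain ⟨S, ⟨hSorth, hNSU⟩, hSuniq⟩ := existsUnique_eq_mul_of_ker_le hkerUN
  have hMNP : M = N * P := toLin'.injective <| LinearMap.ext fun y => by
    simpa [mulVec_mulVec] using (hker (P *ᵥ y) y (by rw [hVUP, mulVec_mulVec])).symm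
  refine ⟨(S, P), ⟨hPorth, hSorth, hVUP, hNSU, by rw [← hNSU, hMNP]⟩, ?_⟩
  rintro ⟨S', P'⟩ ⟨hP'orth, hS'orth, hVUP', hNSU', -⟩
  exact Prod.ext (hSuniq S' ⟨hS'orth, hNSU'⟩) (hPuniq P' ⟨hP'orth, hVUP'⟩)
end

section
/- Convergence condition for forward–backward with fixed Nesterov-like momentum: Let γ > 0, θ > 0, β₁ > 0, and set γ̂ = γ/(2β₁) and a = θ²γ̂ + θ(1 − γ̂). If 0 < 1 − 3θ − γ̂(θ − 1)², then the symmetric matrices Q = γ⁻¹[[1−θ, θ],[θ, a]] and W = γ⁻¹[[1−θ−γ̂−a, θ(1−γ̂)],[θ(1−γ̂), a−θ²γ̂]] are both positive definite. -/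
/-!
Both matrices are `γ⁻¹` times a 2×2 symmetric matrix, so it suffices that the top-left entry
and the determinant are positive. Writing `s = 1 − 3θ − γ̂(θ − 1)²` and `r = θ(1 − γ̂)`, the
matrix inside `W` is exactly `[[s + r, r], [r, r]]`, with determinant `s r`; the determinant of
the matrix inside `Q` is `θ(s + θ)`. The hypothesis `s > 0` forces `θ < 1/3` and `γ̂ < 1`.
-/

open Matrix

theorem Matrix.posDef_fin_two_of_pos_of_det_pos {R : Type*} [Field R] [LinearOrder R]
    [IsStrictOrderedRing R] [StarRing R] [TrivialStar R] {a b d : R} (ha : 0 < a)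
    (hdet : 0 < a * d - b * b) : !![a, b; b, d].PosDef := by
  refine .of_dotProduct_mulVec_pos (by simp [IsHermitian, ← Matrix.ext_iff, Fin.forall_fin_two]) ?_
  intro x hx
  have hx' : x 1 ≠ 0 ∨ a * x 0 + b * x 1 ≠ 0 := by
    by_contra! h
    exact hx (funext <| Fin.forall_fin_two.2 ⟨by simpa [h.1, ha.ne'] using h.2, h.1⟩)
  have hsq : a * (star x ⬝ᵥ (!![a, b; b, d] *ᵥ x))
      = (a * x 0 + b * x 1) ^ 2 + (a * d - b * b) * x 1 ^ 2 := by
    simp [dotProduct, mulVec, Fin.sum_univ_two]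
    ring
  refine pos_of_mul_pos_right (hsq ▸ ?_) ha.le
  rcases hx' with h | h
  · exact add_pos_of_nonneg_of_pos (sq_nonneg _) (mul_pos hdet (pow_two_pos_of_ne_zero h))
  · exact add_pos_of_pos_of_nonneg (pow_two_pos_of_ne_zero h) (mul_nonneg hdet.le (sq_nonneg _))

/-- Convergence condition for forward–backward splitting with fixed
Nesterov-like momentum: with `γ̂ = γ/(2β₁)` and `a = θ²γ̂ + θ(1 − γ̂)`, if
`0 < 1 − 3θ − γ̂(θ − 1)²` then both `Q = γ⁻¹[[1−θ, θ],[θ, a]]` and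
`W = γ⁻¹[[1−θ−γ̂−a, θ(1−γ̂)],[θ(1−γ̂), a−θ²γ̂]]` are positive definite. -/
theorem stmt18 (γ θ β₁ : ℝ) (hγ : 0 < γ) (hθ : 0 < θ) (hβ : 0 < β₁)
    (γhat a : ℝ) (hγhat : γhat = γ / (2 * β₁)) (ha : a = θ ^ 2 * γhat + θ * (1 - γhat))
    (h : 0 < 1 - 3 * θ - γhat * (θ - 1) ^ 2) :
    (γ⁻¹ • !![1 - θ, θ; θ, a]).PosDef ∧
    (γ⁻¹ • !![1 - θ - γhat - a, θ * (1 - γhat);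
              θ * (1 - γhat), a - θ ^ 2 * γhat]).PosDef := by
  set s := 1 - 3 * θ - γhat * (θ - 1) ^ 2 with hs
  have hγhat_pos : 0 < γhat := hγhat ▸ by positivity
  have hθ_lt : θ < 1 / 3 := by nlinarith [mul_nonneg hγhat_pos.le (sq_nonneg (θ - 1))]
  have hγhat_lt : γhat < 1 := by nlinarith
  set r := θ * (1 - γhat) with hr_def
  have hr : 0 < r := mul_pos hθ (by linarith)
  have hQ_det : (1 - θ) * a - θ * θ = θ * (s + θ) := by rw [ha, hs]; ring
  have hW₁₁ : 1 - θ - γhat - a = s + r := by rw [ha, hs, hr_def]; ring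
  have hW₂₂ : a - θ ^ 2 * γhat = r := by rw [ha, hr_def]; ring
  refine ⟨.smul (posDef_fin_two_of_pos_of_det_pos ?_ ?_) (inv_pos.2 hγ),
    .smul (posDef_fin_two_of_pos_of_det_pos ?_ ?_) (inv_pos.2 hγ)⟩
  · linarith
  · rw [hQ_det]; positivity
  · rw [hW₁₁]; positivity
  · rw [hW₁₁, hW₂₂, show (s + r) * r - r * r = s * r by ring]; positivity
end
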